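/- For n ≥ 2 and any complex number z, if P_n(z) = 0 and P_{n-1}(z) = 0 then False; i.e., consecutive Pascalian polynomials share no common root. -/

import Mathlib

def B (n k : ℕ) : ℕ := Nat.choose n ((n - k) / 2)

noncomputable def Pc (n : ℕ) (z : ℂ) : ℂ :=
  ∑ k ∈ Finset.range (n + 1), (B n k : ℂ) * z ^ (n - k)

/-!
Reflecting the index, `P_n(z) = ∑_{j ≤ n} C(n, ⌊j/2⌋) z^j`, and Pascal's rule gives
`P_{m+1}(z) = (1 + z²) P_m(z) + C(m, ⌊m/2⌋) (1 - z) z^{m+1}`. A common root of `P_m` and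
`P_{m+1}` would therefore be `0` or `1`, but `P_m(0) = 1` and `P_m(1)` is a positive integer.
-/

open Finset

theorem Pc_eq_sum_choose_div_two (n : ℕ) (z : ℂ) :
    Pc n z = ∑ j ∈ range (n + 1), (n.choose (j / 2) : ℂ) * z ^ j := by
  rw [Pc, ← sum_range_reflect]
  refine sum_congr rfl fun k hk => ?_
  rw [mem_range] at hk
  rw [B, show n + 1 - 1 - k = n - k by omega, show n - (n - k) = k by omega]

theorem Pc_succ (m : ℕ) (z : ℂ) :
    Pc (m + 1) z = (1 + z ^ 2) * Pc m z + (m.choose (m / 2) : ℂ) * (1 - z) * z ^ (m + 1) := by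
  simp only [Pc_eq_sum_choose_div_two]
  have hpascal (i : ℕ) : ((m + 1).choose ((i + 1 + 1) / 2) : ℂ) * z ^ (i + 1 + 1)
      = (m.choose (i / 2) : ℂ) * z ^ (i + 2) + (m.choose (i / 2 + 1) : ℂ) * z ^ (i + 2) := by
    rw [show (i + 1 + 1) / 2 = i / 2 + 1 by omega, Nat.choose_succ_succ', Nat.cast_add]
    ring
  have hlow : ∑ i ∈ range m, (m.choose (i / 2 + 1) : ℂ) * z ^ (i + 2) + z + 1
      = ∑ j ∈ range (m + 1), (m.choose (j / 2) : ℂ) * z ^ j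
        + (m.choose (m / 2) : ℂ) * z ^ (m + 1) := by
    rw [← Nat.choose_symm_of_eq_add (by omega : m = (m + 1) / 2 + m / 2), ← sum_range_succ,
      sum_range_succ', sum_range_succ']
    norm_num [add_assoc]
  have hhigh : ∑ i ∈ range m, (m.choose (i / 2) : ℂ) * z ^ (i + 2)
      = z ^ 2 * (∑ j ∈ range (m + 1), (m.choose (j / 2) : ℂ) * z ^ j
        - (m.choose (m / 2) : ℂ) * z ^ m) := by
    rw [sum_range_succ, add_sub_cancel_right, mul_sum]
    exact sum_congr rfl fun i _ => by ring
  rw [sum_range_succ', sum_range_succ']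
  simp only [hpascal, sum_add_distrib]
  norm_num
  linear_combination hhigh + hlow

theorem Pc_apply_zero (n : ℕ) : Pc n 0 = 1 := by
  rw [Pc_eq_sum_choose_div_two, sum_range_succ']
  simp

theorem Pc_apply_one_ne_zero (n : ℕ) : Pc n 1 ≠ 0 := by
  have hpos : 0 < ∑ k ∈ range (n + 1), B n k :=
    sum_pos (fun k _ => Nat.choose_pos (Nat.div_le_self _ _ |>.trans (Nat.sub_le _ _)))
      nonempty_range_add_one
  have hsum : Pc n 1 = ((∑ k ∈ range (n + 1), B n k : ℕ) : ℂ) := by simp [Pc]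
  rw [hsum]
  exact_mod_cast hpos.ne'

theorem pascalian_consecutive_no_common_root_general (n : ℕ) (z : ℂ)
    (h1 : Pc n z = 0) (h2 : Pc (n - 1) z = 0) : False := by
  cases n with
  | zero => simp [Pc, B] at h1 -- `P_0 = 1`; here `n - 1` truncates to `0`
  | succ m =>
    rw [Nat.add_sub_cancel] at h2
    have hrec := Pc_succ m z
    rw [h1, h2, mul_zero, zero_add, eq_comm, mul_eq_zero, mul_eq_zero] at hrec
    obtain (hc | hz) | hz := hrec
    · exact (Nat.choose_pos (Nat.div_le_self m 2)).ne' (by exact_mod_cast hc)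
    · exact Pc_apply_one_ne_zero m (sub_eq_zero.1 hz ▸ h2)
    · rw [pow_eq_zero_iff m.succ_ne_zero] at hz
      exact one_ne_zero (Pc_apply_zero m ▸ hz ▸ h2)

theorem pascalian_consecutive_no_common_root (n : ℕ) (hn : 2 ≤ n) (z : ℂ)
    (h1 : Pc n z = 0) (h2 : Pc (n - 1) z = 0) : False :=
  pascalian_consecutive_no_common_root_general n z h1 h2
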